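/- Let π^λ w ∈ Y ⋊ Wᵛ and β[n] ∈ Φᵃ₊ (with β ∈ Φ₊, n ∈ ℤ), and write π^μ w' = s_{β[n]} π^λ w. Suppose (π^λ w)⁻¹(β[n]) ∈ Φᵃ₊. Then μ = λ + (n − ⟨λ,β⟩)β^∨, s_β(μ) = λ − nβ^∨, and λ lies on the segment [μ, s_β(μ)] (i.e. λ = μ − (n−⟨λ,β⟩)β^∨ with sgn(n)·(n−⟨λ,β⟩) ≥ 0, so λ is a convex combination of μ and s_β(μ) in Y⊗ℝ). In particular, if μ ∈ Y⁺ then λ ∈ Y⁺. -/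

import Mathlib

/-- The multiplicative group structure (composition) on `AddAut A`, as in the older Mathlib. -/
instance AddAut.group {A : Type*} [Add A] : Group (AddAut A) where
  mul g h := AddEquiv.trans h g
  one := AddEquiv.refl _
  inv := AddEquiv.symm
  mul_assoc _ _ _ := rfl
  one_mul _ := rfl
  mul_one _ := rfl
  inv_mul_cancel := AddEquiv.self_trans_symm

/-- Sign of an integer, with the convention `isgn 0 = 1`. -/
def isgn (n : ℤ) : ℤ := if 0 ≤ n then 1 else -1

/-- A Kac–Moody root datum: a finite index set `I`, a generalized Cartan matrix `A`,
free `ℤ`-modules `X` and `Y` of finite rank in perfect duality `pairE`, and linearly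
independent families of simple roots `α` and simple coroots `αv` with
`⟨αv i, α j⟩ = A i j`. -/
structure KM (I X Y : Type*) [Fintype I] [AddCommGroup X] [AddCommGroup Y] where
  A : I → I → ℤ
  pairE : Y ≃+ (X →+ ℤ)
  α : I → X
  αv : I → Y
  pair_av_a : ∀ i j, pairE (αv i) (α j) = A i j
  A_diag : ∀ i, A i i = 2
  A_offdiag : ∀ i j, i ≠ j → A i j ≤ 0
  A_zero_iff : ∀ i j, A i j = 0 → A j i = 0
  freeX : Module.Free ℤ X
  freeY : Module.Free ℤ Y
  finX : Module.Finite ℤ X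
  finY : Module.Finite ℤ Y
  indep_α : LinearIndependent ℤ α
  indep_αv : LinearIndependent ℤ αv

namespace KM

variable {I X Y : Type*} [Fintype I] [AddCommGroup X] [AddCommGroup Y] (D : KM I X Y)

open scoped Classical

/-- The duality pairing `⟨y, x⟩`. -/
def pr (y : Y) (x : X) : ℤ := D.pairE y x

/-- Underlying function of the simple reflection `s_i` on `X`. -/
def sXfun (i : I) (x : X) : X := x - D.pr (D.αv i) x • D.α i

lemma sX_invol (i : I) : Function.Involutive (D.sXfun i) := by
  intro x
  have h2 : D.pairE (D.αv i) (D.α i) = 2 := by rw [D.pair_av_a, D.A_diag]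
  show (x - D.pairE (D.αv i) x • D.α i) -
      D.pairE (D.αv i) (x - D.pairE (D.αv i) x • D.α i) • D.α i = x
  rw [map_sub, map_zsmul, h2, smul_eq_mul]
  have h : D.pairE (D.αv i) x - D.pairE (D.αv i) x * 2 = -(D.pairE (D.αv i) x) := by ring
  rw [h, neg_smul]
  abel

/-- The simple reflection `s_i : x ↦ x - ⟨αv i, x⟩ • α i` as an automorphism of `X`. -/
def sX (i : I) : AddAut X :=
  AddEquiv.mk' (D.sX_invol i).toPerm (by
    intro x y
    show ((x + y) - D.pairE (D.αv i) (x + y) • D.α i)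
        = (x - D.pairE (D.αv i) x • D.α i) + (y - D.pairE (D.αv i) y • D.α i)
    rw [map_add, add_smul]
    abel)

/-- The vectorial Weyl group `Wᵛ`, as the subgroup of `AddAut X` generated by the
simple reflections. -/
def Wg : Subgroup (AddAut X) := Subgroup.closure (Set.range D.sX)

/-- The contragredient action of an automorphism `f` of `X` on `Y`; it is characterized by
`⟨actY f y, x⟩ = ⟨y, f⁻¹ x⟩`. -/
def actY (f : AddAut X) (y : Y) : Y :=
  D.pairE.symm ((D.pairE y).comp (AddEquiv.toAddMonoidHom (AddEquiv.symm f)))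

/-- The set of real roots `Φ = Wᵛ · {α i}`. -/
def Phi : Set X := {x | ∃ p : AddAut X × I, p.1 ∈ D.Wg ∧ x = p.1 (D.α p.2)}

/-- The set of positive real roots `Φ₊`. -/
def PhiPos : Set X := {x | x ∈ D.Phi ∧ ∃ c : I → ℕ, x = ∑ i, (c i : ℤ) • D.α i}

/-- The set of negative real roots `Φ₋ = -Φ₊`. -/
def PhiNeg : Set X := {x | -x ∈ D.PhiPos}

/-- The coroot `β^∨` of a real root `β`: if `β = w (α i)` then `β^∨ = w (αv i)`
(this is independent of the chosen expression). -/
noncomputable def coroot (x : X) : Y :=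
  if h : ∃ p : AddAut X × I, p.1 ∈ D.Wg ∧ x = p.1 (D.α p.2) then
    D.actY h.choose.1 (D.αv h.choose.2)
  else 0

/-- The reflection `s_β` associated to a real root `β`: if `β = w (α i)` then
`s_β = w s_i w⁻¹` (independent of the chosen expression). -/
noncomputable def srefl (x : X) : AddAut X :=
  if h : ∃ p : AddAut X × I, p.1 ∈ D.Wg ∧ x = p.1 (D.α p.2) then
    h.choose.1 * D.sX h.choose.2 * h.choose.1⁻¹
  else 1

/-- The integral fundamental chamber `Y^{++}` of dominant coweights. -/
def Ypp : Set Y := {y | ∀ i, 0 ≤ D.pr y (D.α i)}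

/-- The integral Tits cone `Y⁺ = Wᵛ · Y^{++}`. -/
def Yplus : Set Y := {y | ∃ p : AddAut X × Y, p.1 ∈ D.Wg ∧ p.2 ∈ D.Ypp ∧ y = D.actY p.1 p.2}

/-- The dominant representative `λ^{++}` of `λ ∈ Y⁺` (the unique dominant element of the
orbit `Wᵛ · λ`). -/
noncomputable def dompp (y : Y) : Y :=
  if h : ∃ p : AddAut X × Y, p.1 ∈ D.Wg ∧ p.2 ∈ D.Ypp ∧ y = D.actY p.1 p.2 then
    h.choose.2
  else y

/-- The inversion set `Inv(w) = {α ∈ Φ₊ | w α ∈ Φ₋}`. -/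
def invSet (w : AddAut X) : Set X := {a | a ∈ D.PhiPos ∧ w a ∈ D.PhiNeg}

/-- The Bruhat length `ℓ(w) = |Inv(w)|`. -/
noncomputable def len (w : AddAut X) : ℕ := (D.invSet w).ncard

/-- The relative length `ℓ_v(w) = |Inv(w⁻¹)∖Inv(v⁻¹)| − |Inv(w⁻¹)∩Inv(v⁻¹)|`. -/
noncomputable def rlen (v w : AddAut X) : ℤ :=
  ((D.invSet w⁻¹ \ D.invSet v⁻¹).ncard : ℤ) - ((D.invSet w⁻¹ ∩ D.invSet v⁻¹).ncard : ℤ)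

/-- `v^λ`: the minimal-length element of `Wᵛ` sending `λ^{++}` to `λ`. -/
noncomputable def vmin (l : Y) : AddAut X :=
  if h : ∃ w : AddAut X, w ∈ D.Wg ∧ D.actY w (D.dompp l) = l ∧
      ∀ w' : AddAut X, w' ∈ D.Wg → D.actY w' (D.dompp l) = l → D.len w ≤ D.len w'
  then h.choose else 1

/-- The set of reflections of `Wᵛ`. -/
def reflections : Set (AddAut X) := {r | ∃ b ∈ D.PhiPos, r = D.srefl b}

/-- One step of the Bruhat order on `Wᵛ`. -/
def vectStep (u u' : AddAut X) : Prop :=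
  ∃ r ∈ D.reflections, u' = u * r ∧ D.len u < D.len u'

/-- The Bruhat order on `Wᵛ`. -/
def vlt : AddAut X → AddAut X → Prop := Relation.TransGen D.vectStep

/-- One step of the relative Bruhat order `<_v` on `Wᵛ`. -/
def rvStep (v u u' : AddAut X) : Prop :=
  ∃ r ∈ D.reflections, u' = u * r ∧ D.rlen v u < D.rlen v u'

/-- The relative Bruhat order `<_v` on `Wᵛ`. -/
def rvlt (v : AddAut X) : AddAut X → AddAut X → Prop := Relation.TransGen (D.rvStep v)

/-- The stabilizer `W_λ` of `λ` in `Wᵛ`. -/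
def Wstab (l : Y) : Set (AddAut X) := {u | u ∈ D.Wg ∧ D.actY u l = l}

/-- `v` is the minimal-length representative of its coset `v W_λ`. -/
def IsMinRep (l : Y) (v : AddAut X) : Prop :=
  v ∈ D.Wg ∧ ∀ u ∈ D.Wstab l, D.len v ≤ D.len (v * u)

/-- The action of `π^λ w ∈ Y ⋊ Wᵛ` on affine roots:
`π^λ w (β + nπ) = w β + (n + ⟨λ, w β⟩)π`. -/
def affAct (a : Y × AddAut X) (r : X × ℤ) : X × ℤ :=
  (a.2 r.1, r.2 + D.pr a.1 (a.2 r.1))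

/-- The set `Φᵃ₊` of positive affine roots. -/
def PhiAffPos : Set (X × ℤ) :=
  {r | r.1 ∈ D.Phi ∧ (0 < r.2 ∨ (r.2 = 0 ∧ r.1 ∈ D.PhiPos))}

/-- The affine root `β[n] = sgn(n)β + |n|π`. -/
def aroot (b : X) (n : ℤ) : X × ℤ := (isgn n • b, |n|)

/-- The affine reflection `s_{β[n]} = π^{nβ^∨} s_β`, as an element of `Y ⋊ Wᵛ`. -/
noncomputable def saff (b : X) (n : ℤ) : Y × AddAut X := (n • D.coroot b, D.srefl b)

/-- Multiplication in the semidirect product `Y ⋊ Wᵛ`: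
`π^λ w · π^μ v = π^{λ + w μ} (w v)`. -/
def mulA (a b : Y × AddAut X) : Y × AddAut X := (a.1 + D.actY a.2 b.1, a.2 * b.2)

/-- One step `x < x·s_{β[n]}` of the affine Bruhat order on `W⁺`, for `β ∈ Φ₊`, `n ∈ ℤ`,
requiring both elements to lie in `W⁺` and `x(β[n]) ∈ Φᵃ₊`. -/
def astep (a b : Y × AddAut X) : Prop :=
  a.1 ∈ D.Yplus ∧ b.1 ∈ D.Yplus ∧ a.2 ∈ D.Wg ∧ b.2 ∈ D.Wg ∧
    ∃ g ∈ D.PhiPos, ∃ m : ℤ,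
      D.affAct a (aroot (X := X) g m) ∈ D.PhiAffPos ∧ b = D.mulA a (D.saff g m)

/-- The (strict) affine Bruhat order on `W⁺`. -/
def alt : (Y × AddAut X) → (Y × AddAut X) → Prop := Relation.TransGen D.astep

/-- The affine Bruhat order on `W⁺`. -/
def ale (a b : Y × AddAut X) : Prop := a = b ∨ D.alt a b

/-- `b` covers `a` for the affine Bruhat order: `a < b` and nothing lies strictly
between them. -/
def acovers (a b : Y × AddAut X) : Prop :=
  D.alt a b ∧ ∀ c, D.alt a c → D.alt c b → False

/-- `Λ` is a family of fundamental weights: `⟨αv i, Λ j⟩ = δ_{ij}`. -/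
def IsFundWeights (Λ : I → X) : Prop :=
  ∀ i j, D.pr (D.αv i) (Λ j) = if i = j then 1 else 0

/-- The height `ht(λ) = ⟨λ, ρ⟩` where `ρ = Σ_i Λ_i`. -/
def ht (Λ : I → X) (l : Y) : ℤ := D.pr l (∑ i, Λ i)

/-- The affine length `ℓᵃ` with integral values. -/
noncomputable def alen (Λ : I → X) (a : Y × AddAut X) : ℤ :=
  2 * D.ht Λ (D.dompp a.1) +
    ((({x | x ∈ D.invSet a.2⁻¹ ∧ 0 ≤ D.pr a.1 x}).ncard : ℤ) -
      (({x | x ∈ D.invSet a.2⁻¹ ∧ D.pr a.1 x < 0}).ncard : ℤ))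

end KM

/-!
Write `μ` for the translation part of `s_{β[n]} π^λ w`, so that `μ = n β^∨ + s_β(λ)`. The
identities for `μ` and `s_β(μ)` are the formula `s_β(y) = y - ⟨y, β⟩ β^∨`, and the sign condition
is the positivity of `(π^λ w)⁻¹(β[n]) = w⁻¹(sgn(n) β) + sgn(n) (n - ⟨λ, β⟩) π`.

The last claim is a convexity property of the Tits cone: `y ∈ Y⁺` iff only finitely many positive
real roots are negative on `y` (Kac, Prop. 3.12). As `λ` lies on the segment `[μ, s_β(μ)]`, a
root negative on `λ` is negative on `μ` or on `s_β(μ)`, and both lie in `Y⁺`.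

This characterisation of `Y⁺` rests on every real root being positive or negative, proved as for
Coxeter groups (Humphreys, §5.4): if `ℓ(w s_i) ≥ ℓ(w)` then `w(α_i) ≥ 0`. By induction on the word
length, split off from `w` a longest alternating suffix `⋯ s_i s_j` without cancellation; this
reduces the claim to the subgroup `⟨s_i, s_j⟩`, where it is an explicit computation: the
coordinates never turn negative if `a_ij a_ji ≥ 4`, and otherwise `s_i s_j` has order
`m ∈ {2, 3, 4, 6}` and the braid relation shortens every alternating word longer than `m`.
-/

namespace KM

section AlternatingWords

variable {I : Type*}

def altLetter (i j : I) : ℕ → I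
  | 0 => j
  | t + 1 => altLetter j i t

/-- The alternating word `[⋯, i, j]` of length `t`, ending in `j`. -/
def altList (i j : I) : ℕ → List I
  | 0 => []
  | t + 1 => altLetter i j t :: altList i j t

lemma altLetter_eq (i j : I) (t : ℕ) : altLetter i j t = if Even t then j else i := by
  induction t generalizing i j with
  | zero => rfl
  | succ t ih => by_cases ht : Even t <;> simp [altLetter, ih, ht, Nat.even_add_one]

lemma altLetter_cases (i j : I) (t : ℕ) :
    (altLetter i j t = i ∧ altLetter i j (t + 1) = j) ∨
      (altLetter i j t = j ∧ altLetter i j (t + 1) = i) := by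
  by_cases ht : Even t <;> simp [altLetter_eq, ht, Nat.even_add_one]

@[simp] lemma length_altList (i j : I) (t : ℕ) : (altList i j t).length = t := by
  induction t with
  | zero => rfl
  | succ t ih => simp [altList, ih]

lemma altList_append_singleton (i j : I) (t : ℕ) :
    altList i j t ++ [i] = altList j i (t + 1) := by
  induction t with
  | zero => rfl
  | succ t ih => rw [altList, List.cons_append, ih]; rfl

end AlternatingWords

/-- The coordinates of `⋯ s_i s_j (α i)` in the basis `α i, α j`, for `a = -A i j` and
`b = -A j i` (see `word_altList_apply_α`). -/
def dihedralCoords (a b : ℤ) : ℕ → ℤ × ℤ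
  | 0 => (1, 0)
  | t + 1 =>
    let v := dihedralCoords a b t
    if Even t then (v.1, b * v.1 - v.2) else (a * v.2 - v.1, v.2)

lemma dihedralCoords_nonneg {a b : ℤ} (ha : 0 ≤ a) (hb : 0 ≤ b) (hab : 4 ≤ a * b)
    (t : ℕ) :
    0 ≤ (dihedralCoords a b t).1 ∧ 0 ≤ (dihedralCoords a b t).2 ∧
      if Even t then 2 * (dihedralCoords a b t).2 ≤ b * (dihedralCoords a b t).1
      else 2 * (dihedralCoords a b t).1 ≤ a * (dihedralCoords a b t).2 := by
  induction t with
  | zero => simp [dihedralCoords, hb]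
  | succ t ih =>
    obtain ⟨hx, hy, hinv⟩ := ih
    by_cases ht : Even t
    · simp only [ht, if_true] at hinv
      simp only [dihedralCoords, ht, if_true, Nat.even_add_one, not_true_eq_false, if_false]
      exact ⟨hx, by nlinarith, by nlinarith⟩
    · simp only [ht, if_false] at hinv
      simp only [dihedralCoords, ht, if_false, Nat.even_add_one, not_false_eq_true, if_true]
      exact ⟨by nlinarith, hy, by nlinarith⟩

lemma cartan_rank_two_cases {a b : ℤ} (ha : a ≤ 0) (hb : b ≤ 0) (hab : a = 0 ↔ b = 0)
    (h : a * b < 4) :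
    (a = 0 ∧ b = 0) ∨ (a = -1 ∧ b = -1) ∨ (a = -1 ∧ b = -2) ∨ (a = -2 ∧ b = -1) ∨
      (a = -1 ∧ b = -3) ∨ (a = -3 ∧ b = -1) := by
  have ha' : -3 ≤ a := by
    by_contra! h'
    have : b ≠ 0 := fun hb0 => by have := hab.mpr hb0; omega
    nlinarith [lt_of_le_of_ne hb this]
  have hb' : -3 ≤ b := by
    by_contra! h'
    have : a ≠ 0 := fun ha0 => by have := hab.mp ha0; omega
    nlinarith [lt_of_le_of_ne ha this]
  interval_cases a <;> interval_cases b <;> simp_all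

variable {I X Y : Type*} [Fintype I] [AddCommGroup X] [AddCommGroup Y] (D : KM I X Y)

section Automorphisms

@[simp] lemma mul_apply (f g : AddAut X) (x : X) : (f * g) x = f (g x) := rfl

@[simp] lemma one_apply (x : X) : (1 : AddAut X) x = x := rfl

@[simp] lemma inv_apply_apply (f : AddAut X) (x : X) : f⁻¹ (f x) = x := f.symm_apply_apply x

end Automorphisms

section Pairing

@[simp] lemma pr_add_left (y z : Y) (x : X) : D.pr (y + z) x = D.pr y x + D.pr z x := by
  simp [pr]

@[simp] lemma pr_sub_left (y z : Y) (x : X) : D.pr (y - z) x = D.pr y x - D.pr z x := by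
  simp [pr]

@[simp] lemma pr_neg_left (y : Y) (x : X) : D.pr (-y) x = -D.pr y x := by
  simp [pr]

@[simp] lemma pr_zsmul_left (k : ℤ) (y : Y) (x : X) : D.pr (k • y) x = k * D.pr y x := by
  simp [pr]

@[simp] lemma pr_add_right (y : Y) (x x' : X) : D.pr y (x + x') = D.pr y x + D.pr y x' := by
  simp [pr]

@[simp] lemma pr_sub_right (y : Y) (x x' : X) : D.pr y (x - x') = D.pr y x - D.pr y x' := by
  simp [pr]

@[simp] lemma pr_neg_right (y : Y) (x : X) : D.pr y (-x) = -D.pr y x := by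
  simp [pr]

@[simp] lemma pr_zsmul_right (y : Y) (k : ℤ) (x : X) : D.pr y (k • x) = k * D.pr y x := by
  simp [pr]

@[simp] lemma pr_αv_α (i j : I) : D.pr (D.αv i) (D.α j) = D.A i j := D.pair_av_a i j

lemma ext_pr {y z : Y} (h : ∀ x, D.pr y x = D.pr z x) : y = z :=
  D.pairE.injective (AddMonoidHom.ext h)

lemma pr_actY (f : AddAut X) (y : Y) (x : X) : D.pr (D.actY f y) x = D.pr y (f⁻¹ x) := by
  simp [pr, actY]
  rfl

@[simp] lemma pr_actY_apply (f : AddAut X) (y : Y) (x : X) :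
    D.pr (D.actY f y) (f x) = D.pr y x := by
  rw [pr_actY]
  exact congrArg _ (f.symm_apply_apply x)

lemma actY_one (y : Y) : D.actY 1 y = y :=
  D.ext_pr fun x => D.pr_actY 1 y x

lemma actY_mul (f g : AddAut X) (y : Y) : D.actY (f * g) y = D.actY f (D.actY g y) :=
  D.ext_pr fun x => by simp only [pr_actY]; rfl

lemma actY_sub (f : AddAut X) (y z : Y) : D.actY f (y - z) = D.actY f y - D.actY f z :=
  D.ext_pr fun x => by simp [pr_actY]

lemma actY_zsmul (f : AddAut X) (k : ℤ) (y : Y) : D.actY f (k • y) = k • D.actY f y :=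
  D.ext_pr fun x => by simp [pr_actY]

end Pairing

section SimpleReflections

lemma sX_apply (i : I) (x : X) : D.sX i x = x - D.pr (D.αv i) x • D.α i := rfl

lemma sX_sX (i : I) (x : X) : D.sX i (D.sX i x) = x := D.sX_invol i x

lemma sX_mul_self (i : I) : D.sX i * D.sX i = 1 :=
  AddEquiv.ext (D.sX_sX i)

lemma sX_inv (i : I) : (D.sX i)⁻¹ = D.sX i :=
  inv_eq_of_mul_eq_one_right (D.sX_mul_self i)

lemma sX_α_self (i : I) : D.sX i (D.α i) = -D.α i := by
  rw [sX_apply, pr_αv_α, D.A_diag]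
  module

lemma sX_mem_Wg (i : I) : D.sX i ∈ D.Wg := Subgroup.subset_closure ⟨i, rfl⟩

lemma actY_sX (i : I) (y : Y) : D.actY (D.sX i) y = y - D.pr y (D.α i) • D.αv i :=
  D.ext_pr fun x => by
    rw [pr_actY, sX_inv, sX_apply]
    simp only [pr_sub_left, pr_zsmul_left, pr_sub_right, pr_zsmul_right]
    ring

end SimpleReflections

section PositiveCone

def posCone : AddSubmonoid X where
  carrier := {x | ∃ c : I → ℕ, x = ∑ i, (c i : ℤ) • D.α i}
  add_mem' := by
    rintro _ _ ⟨c, rfl⟩ ⟨d, rfl⟩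
    exact ⟨c + d, by simp [add_smul, Finset.sum_add_distrib]⟩
  zero_mem' := ⟨0, by simp⟩

lemma α_mem_posCone (i : I) : D.α i ∈ D.posCone := by
  classical
  exact ⟨Pi.single i 1, by simp⟩

lemma zsmul_mem_posCone {k : ℤ} (hk : 0 ≤ k) {x : X} (hx : x ∈ D.posCone) :
    k • x ∈ D.posCone := by
  lift k to ℕ using hk
  simpa using nsmul_mem hx k

lemma eq_zero_of_mem_posCone_of_neg_mem {x : X} (hx : x ∈ D.posCone) (hx' : -x ∈ D.posCone) :
    x = 0 := by
  obtain ⟨c, rfl⟩ := hx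
  obtain ⟨d, hd⟩ := hx'
  have hsum : ∑ i, ((c i : ℤ) + d i) • D.α i = 0 := by
    simp only [add_smul, Finset.sum_add_distrib, ← hd, add_neg_cancel]
  have hcd := Fintype.linearIndependent_iff.mp D.indep_α _ hsum
  have hc (i : I) : (c i : ℤ) = 0 := by have := hcd i; omega
  simp [hc]

lemma exists_eq_nsmul_α_of_add_eq {x y : X} (hx : x ∈ D.posCone) (hy : y ∈ D.posCone) {N : ℤ}
    {i : I} (h : x + y = N • D.α i) : ∃ c : ℕ, x = c • D.α i := by
  classical
  obtain ⟨c, rfl⟩ := hx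
  obtain ⟨d, rfl⟩ := hy
  have hcd :
      ∑ k, ((c k : ℤ) + d k) • D.α k = ∑ k, (Pi.single i N : I → ℤ) k • D.α k := by
    simpa [add_smul, Finset.sum_add_distrib] using h
  have hc (k : I) (hk : k ≠ i) : c k = 0 := by
    have := Fintype.linearIndependent_iffₛ.mp D.indep_α _ _ hcd k
    simp only [Pi.single_apply, hk, if_false] at this
    omega
  refine ⟨c i, ?_⟩
  rw [Finset.sum_eq_single i (fun k _ hk => by simp [hc k hk]) (by simp)]
  simp

lemma pr_nonneg_of_mem_posCone {y : Y} (hy : y ∈ D.Ypp) {x : X} (hx : x ∈ D.posCone) :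
    0 ≤ D.pr y x := by
  obtain ⟨c, rfl⟩ := hx
  simp only [pr, map_sum, map_zsmul, smul_eq_mul]
  exact Finset.sum_nonneg fun i _ => mul_nonneg (Int.natCast_nonneg (c i)) (hy i)

end PositiveCone

section Words

def word (l : List I) : AddAut X := (l.map D.sX).prod

@[simp] lemma word_nil : D.word [] = 1 := rfl

@[simp] lemma word_cons (i : I) (l : List I) : D.word (i :: l) = D.sX i * D.word l := rfl

@[simp] lemma word_append (l l' : List I) : D.word (l ++ l') = D.word l * D.word l' := by
  simp [word]

lemma word_mem_Wg (l : List I) : D.word l ∈ D.Wg := by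
  induction l with
  | nil => exact D.Wg.one_mem
  | cons i l ih => exact D.Wg.mul_mem (D.sX_mem_Wg i) ih

lemma mem_Wg_iff_exists_word {w : AddAut X} : w ∈ D.Wg ↔ ∃ l, D.word l = w := by
  refine ⟨fun hw => ?_, by rintro ⟨l, rfl⟩; exact D.word_mem_Wg l⟩
  induction hw using Subgroup.closure_induction_left with
  | one => exact ⟨[], rfl⟩
  | mul_left _ hs _ _ ih =>
    obtain ⟨i, rfl⟩ := hs
    obtain ⟨l, rfl⟩ := ih
    exact ⟨i :: l, rfl⟩
  | inv_mul_cancel _ hs _ _ ih =>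
    obtain ⟨i, rfl⟩ := hs
    obtain ⟨l, rfl⟩ := ih
    exact ⟨i :: l, by rw [sX_inv, word_cons]⟩

lemma word_mem_span (l : List I) {x : X} (hx : x ∈ Submodule.span ℤ (Set.range D.α)) :
    D.word l x ∈ Submodule.span ℤ (Set.range D.α) := by
  induction l with
  | nil => exact hx
  | cons i l ih =>
    exact sub_mem ih (Submodule.smul_mem _ _ (Submodule.subset_span ⟨i, rfl⟩))

noncomputable def wordLength (w : AddAut X) : ℕ :=
  sInf {n | ∃ l, D.word l = w ∧ l.length = n}

lemma wordLength_le_length {l : List I} {w : AddAut X} (h : D.word l = w) :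
    D.wordLength w ≤ l.length :=
  Nat.sInf_le ⟨l, h, rfl⟩

lemma exists_word_length_eq {w : AddAut X} (hw : w ∈ D.Wg) :
    ∃ l, D.word l = w ∧ l.length = D.wordLength w := by
  obtain ⟨l, hl⟩ := D.mem_Wg_iff_exists_word.mp hw
  exact Nat.sInf_mem (s := {n | ∃ l, D.word l = w ∧ l.length = n}) ⟨_, l, hl, rfl⟩

lemma wordLength_mul_le {v w : AddAut X} (hv : v ∈ D.Wg) (hw : w ∈ D.Wg) :
    D.wordLength (v * w) ≤ D.wordLength v + D.wordLength w := by
  obtain ⟨l, rfl, hl⟩ := D.exists_word_length_eq hv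
  obtain ⟨l', rfl, hl'⟩ := D.exists_word_length_eq hw
  simpa [hl, hl'] using D.wordLength_le_length (D.word_append l l')

lemma eq_one_of_wordLength_eq_zero {w : AddAut X} (hw : w ∈ D.Wg) (h : D.wordLength w = 0) :
    w = 1 := by
  obtain ⟨l, rfl, hl⟩ := D.exists_word_length_eq hw
  rw [h, List.length_eq_zero_iff] at hl
  rw [hl, word_nil]

lemma exists_wordLength_mul_sX_lt {w : AddAut X} (hw : w ∈ D.Wg) (h : D.wordLength w ≠ 0) :
    ∃ j, D.wordLength (w * D.sX j) < D.wordLength w := by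
  obtain ⟨l, rfl, hl⟩ := D.exists_word_length_eq hw
  obtain ⟨l', j, rfl⟩ := (List.eq_nil_or_concat' l).resolve_left (by rintro rfl; simp_all)
  refine ⟨j, ?_⟩
  have hw' : D.word (l' ++ [j]) * D.sX j = D.word l' := by
    rw [word_append, mul_assoc, word_cons, word_nil, mul_one, sX_mul_self, mul_one]
  have := D.wordLength_le_length hw'.symm
  simp only [List.length_append, List.length_singleton] at hl
  omega

end Words

section Roots

lemma α_mem_Phi (i : I) : D.α i ∈ D.Phi := ⟨(1, i), D.Wg.one_mem, rfl⟩

lemma α_mem_PhiPos (i : I) : D.α i ∈ D.PhiPos := ⟨D.α_mem_Phi i, D.α_mem_posCone i⟩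

lemma apply_mem_Phi {w : AddAut X} (hw : w ∈ D.Wg) {x : X} (hx : x ∈ D.Phi) :
    w x ∈ D.Phi := by
  obtain ⟨⟨u, i⟩, hu, rfl⟩ := hx
  exact ⟨(w * u, i), D.Wg.mul_mem hw hu, rfl⟩

lemma neg_mem_Phi {x : X} (hx : x ∈ D.Phi) : -x ∈ D.Phi := by
  obtain ⟨⟨u, i⟩, hu, rfl⟩ := hx
  refine ⟨(u * D.sX i, i), D.Wg.mul_mem hu (D.sX_mem_Wg i), ?_⟩
  change -u (D.α i) = u (D.sX i (D.α i))
  rw [sX_α_self, map_neg]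

lemma zero_notMem_Phi : (0 : X) ∉ D.Phi := by
  rintro ⟨⟨u, i⟩, -, h⟩
  exact D.indep_α.ne_zero i (u.injective (h.symm.trans (map_zero u).symm))

lemma notMem_PhiNeg_of_mem_PhiPos {x : X} (hx : x ∈ D.PhiPos) : x ∉ D.PhiNeg := fun hx' => by
  have := D.eq_zero_of_mem_posCone_of_neg_mem hx.2 hx'.2
  exact D.zero_notMem_Phi (this ▸ hx.1)

lemma eq_one_or_eq_neg_one_of_smul_α_mem_Phi {c : ℤ} {i : I} (h : c • D.α i ∈ D.Phi) :
    c = 1 ∨ c = -1 := by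
  classical
  obtain ⟨⟨u, l⟩, hu, h⟩ := h
  dsimp only at hu h
  obtain ⟨u', hu'⟩ := D.mem_Wg_iff_exists_word.mp (D.Wg.inv_mem hu)
  obtain ⟨g, hg⟩ := (Submodule.mem_span_range_iff_exists_fun ℤ).mp
    (D.word_mem_span u' (Submodule.subset_span ⟨i, rfl⟩))
  have hl : ∑ k, (Pi.single l 1 : I → ℤ) k • D.α k = ∑ k, (c * g k) • D.α k := by
    have hl : D.α l = c • D.word u' (D.α i) := by
      rw [← map_zsmul, h, hu']
      exact (u.symm_apply_apply _).symm
    simp [hl, ← hg, Finset.smul_sum, smul_smul]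
  have := Fintype.linearIndependent_iffₛ.mp D.indep_α _ _ hl l
  exact Int.isUnit_iff.mp (IsUnit.of_mul_eq_one _ (by simpa using this.symm))

end Roots

section RankTwo

variable (i j : I)

lemma word_altList_succ (t : ℕ) :
    D.word (altList i j (t + 1)) = D.sX (altLetter i j t) * D.word (altList i j t) := rfl

lemma word_altList_mul_sX (t : ℕ) :
    D.word (altList i j t) * D.sX i = D.word (altList j i (t + 1)) := by
  rw [← altList_append_singleton, word_append, word_cons, word_nil, mul_one]

lemma word_altList_apply_α (t : ℕ) :
    D.word (altList i j t) (D.α i) =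
      (dihedralCoords (-D.A i j) (-D.A j i) t).1 • D.α i +
        (dihedralCoords (-D.A i j) (-D.A j i) t).2 • D.α j := by
  induction t with
  | zero => simp [altList, dihedralCoords]
  | succ t ih =>
    rw [word_altList_succ, mul_apply, ih, altLetter_eq]
    by_cases ht : Even t
    · simp only [ht, if_true, dihedralCoords, sX_apply, pr_add_right, pr_zsmul_right, pr_αv_α,
        D.A_diag]
      module
    · simp only [ht, if_false, dihedralCoords, sX_apply, pr_add_right, pr_zsmul_right, pr_αv_α,
        D.A_diag]
      module

lemma exists_braid_of_mul_lt_four (hij : i ≠ j) (h : D.A i j * D.A j i < 4) :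
    ∃ m, 1 ≤ m ∧ D.word (altList i j m) = D.word (altList j i m) ∧
      ∀ t < m, 0 ≤ (dihedralCoords (-D.A i j) (-D.A j i) t).1 ∧
        0 ≤ (dihedralCoords (-D.A i j) (-D.A j i) t).2 := by
  rcases cartan_rank_two_cases (D.A_offdiag i j hij) (D.A_offdiag j i hij.symm)
      ⟨D.A_zero_iff i j, D.A_zero_iff j i⟩ h with
    ⟨h1, h2⟩ | ⟨h1, h2⟩ | ⟨h1, h2⟩ | ⟨h1, h2⟩ | ⟨h1, h2⟩ | ⟨h1, h2⟩
  -- `m` is the order of `s_i s_j`: types `A₁ × A₁`, `A₂`, `B₂`, `C₂` and `G₂` (twice).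
  on_goal 1 => refine ⟨2, ?_⟩
  on_goal 2 => refine ⟨3, ?_⟩
  on_goal 3 => refine ⟨4, ?_⟩
  on_goal 4 => refine ⟨4, ?_⟩
  on_goal 5 => refine ⟨6, ?_⟩
  on_goal 6 => refine ⟨6, ?_⟩
  all_goals
    refine ⟨by norm_num, ?_, by simp only [h1, h2]; decide⟩
    ext x
    simp only [altList, altLetter, word_cons, word_nil, mul_one, mul_apply, sX_apply,
      pr_sub_right, pr_zsmul_right, pr_αv_α, h1, h2, D.A_diag]
    module

lemma exists_shorter_word_of_braid {m : ℕ} (hm : 1 ≤ m)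
    (hbraid : D.word (altList i j m) = D.word (altList j i m)) {t : ℕ} (ht : m ≤ t) :
    ∃ l : List I, l.length < t ∧ D.word l = D.word (altList j i (t + 1)) := by
  induction t, ht using Nat.le_induction with
  | base =>
    obtain ⟨k, rfl⟩ := Nat.exists_eq_add_of_le' hm
    refine ⟨altList i j k, by simp, ?_⟩
    rw [word_altList_succ, ← hbraid, word_altList_succ, ← mul_assoc]
    change _ = D.sX (altLetter i j k) * D.sX (altLetter i j k) * _
    rw [sX_mul_self, one_mul]
  | succ t _ ih =>
    obtain ⟨l, hl, hw⟩ := ih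
    exact ⟨altLetter j i (t + 1) :: l, by simpa using hl, by rw [word_cons, hw]; rfl⟩

theorem word_altList_apply_α_nonneg_or_wordLength_lt (hij : i ≠ j) (t : ℕ) :
    (∃ x y : ℤ, 0 ≤ x ∧ 0 ≤ y ∧
        D.word (altList i j t) (D.α i) = x • D.α i + y • D.α j) ∨
      D.wordLength (D.word (altList i j t) * D.sX i) < t := by
  have ha := D.A_offdiag i j hij
  have hb := D.A_offdiag j i hij.symm
  rcases le_or_gt 4 (D.A i j * D.A j i) with hinf | hfin
  · obtain ⟨hx, hy, -⟩ := dihedralCoords_nonneg (neg_nonneg.mpr ha) (neg_nonneg.mpr hb)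
      (by rwa [neg_mul_neg]) t
    exact Or.inl ⟨_, _, hx, hy, D.word_altList_apply_α i j t⟩
  obtain ⟨m, hm, hbraid, hsmall⟩ := D.exists_braid_of_mul_lt_four i j hij hfin
  rcases lt_or_ge t m with htm | hmt
  · exact Or.inl ⟨_, _, (hsmall t htm).1, (hsmall t htm).2, D.word_altList_apply_α i j t⟩
  · obtain ⟨l, hl, hw⟩ := D.exists_shorter_word_of_braid i j hm hbraid hmt
    rw [word_altList_mul_sX]
    exact Or.inr ((D.wordLength_le_length hw).trans_lt hl)

end RankTwo

section Positivity

lemma exists_reduced_factorization_altList {w : AddAut X} (hw : w ∈ D.Wg) {j : I}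
    (hj : D.wordLength (w * D.sX j) < D.wordLength w) (i : I) :
    ∃ v ∈ D.Wg, ∃ t, 1 ≤ t ∧ w = v * D.word (altList i j t) ∧
      D.wordLength v + t = D.wordLength w ∧
      D.wordLength v ≤ D.wordLength (v * D.sX i) ∧
      D.wordLength v ≤ D.wordLength (v * D.sX j) := by
  set u : ℕ → AddAut X := fun t => w * (D.word (altList i j t))⁻¹ with hu
  have hu_succ (t : ℕ) : u (t + 1) = u t * D.sX (altLetter i j t) := by
    simp only [hu, word_altList_succ, mul_inv_rev, sX_inv, mul_assoc]
  have hmem (t : ℕ) : u t ∈ D.Wg := D.Wg.mul_mem hw (D.Wg.inv_mem (D.word_mem_Wg _))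
  have hN (t : ℕ) : D.wordLength w ≤ D.wordLength (u t) + t := by
    have := D.wordLength_mul_le (hmem t) (D.word_mem_Wg (altList i j t))
    have := D.wordLength_le_length (l := altList i j t) rfl
    simp only [hu, inv_mul_cancel_right, length_altList] at *
    omega
  -- `t` is the length of a longest alternating suffix `⋯ s_i s_j` of `w` without cancellation.
  let P t := D.wordLength (u t) + t ≤ D.wordLength w
  have hP1 : P 1 := by
    have : u 1 = w * D.sX j := by simp [hu, altList, altLetter, sX_inv]
    simp only [P, this]
    omega
  obtain ⟨t, hPt, hPt1, ht⟩ : ∃ t, P t ∧ ¬P (t + 1) ∧ 1 ≤ t :=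
    ⟨Nat.findGreatest P (D.wordLength w), Nat.findGreatest_spec (m := 1) (by omega) hP1,
      fun h => Nat.findGreatest_is_greatest (Nat.lt_succ_self _) (by omega) h,
      Nat.le_findGreatest (by omega) hP1⟩
  refine ⟨u t, hmem t, t, ht, by simp [hu], le_antisymm hPt (hN t), ?_⟩
  obtain ⟨k, rfl⟩ := Nat.exists_eq_add_of_le' ht
  have hup :
      D.wordLength (u (k + 1)) ≤ D.wordLength (u (k + 1) * D.sX (altLetter i j (k + 1))) := by
    rw [← hu_succ]
    simp only [P] at hPt hPt1
    omega
  have hdown : D.wordLength (u (k + 1)) ≤ D.wordLength (u (k + 1) * D.sX (altLetter i j k)) := by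
    have : u (k + 1) * D.sX (altLetter i j k) = u k := by
      rw [hu_succ, mul_assoc, sX_mul_self, mul_one]
    rw [this]
    have := hN k
    simp only [P] at hPt
    omega
  rcases altLetter_cases i j k with ⟨hk, hk1⟩ | ⟨hk, hk1⟩
  · rw [hk1] at hup; rw [hk] at hdown; exact ⟨hdown, hup⟩
  · rw [hk1] at hup; rw [hk] at hdown; exact ⟨hup, hdown⟩

theorem apply_α_mem_posCone_of_wordLength_le {w : AddAut X} (hw : w ∈ D.Wg) {i : I}
    (h : D.wordLength w ≤ D.wordLength (w * D.sX i)) : w (D.α i) ∈ D.posCone := by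
  induction hn : D.wordLength w using Nat.strong_induction_on generalizing w i with
  | _ n ih =>
  subst hn
  by_cases h0 : D.wordLength w = 0
  · rw [D.eq_one_of_wordLength_eq_zero hw h0]
    exact D.α_mem_posCone i
  obtain ⟨j, hj⟩ := D.exists_wordLength_mul_sX_lt hw h0
  have hij : i ≠ j := by rintro rfl; omega
  obtain ⟨v, hv, t, ht, rfl, hlen, hvi, hvj⟩ := D.exists_reduced_factorization_altList hw hj i
  have hvi' := ih _ (by omega) hv hvi rfl
  have hvj' := ih _ (by omega) hv hvj rfl
  rcases D.word_altList_apply_α_nonneg_or_wordLength_lt i j hij t with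
    ⟨x, y, hx, hy, hxy⟩ | hlt
  · rw [mul_apply, hxy, map_add, map_zsmul, map_zsmul]
    exact add_mem (D.zsmul_mem_posCone hx hvi') (D.zsmul_mem_posCone hy hvj')
  · have := D.wordLength_mul_le hv
      (D.Wg.mul_mem (D.word_mem_Wg (altList i j t)) (D.sX_mem_Wg i))
    rw [← mul_assoc] at this
    omega

theorem apply_α_mem_posCone_or_neg_mem {w : AddAut X} (hw : w ∈ D.Wg) (i : I) :
    w (D.α i) ∈ D.posCone ∨ -w (D.α i) ∈ D.posCone := by
  rcases le_or_gt (D.wordLength w) (D.wordLength (w * D.sX i)) with h | h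
  · exact Or.inl (D.apply_α_mem_posCone_of_wordLength_le hw h)
  · right
    have h' : D.wordLength (w * D.sX i) ≤ D.wordLength (w * D.sX i * D.sX i) := by
      rw [mul_assoc, sX_mul_self, mul_one]
      exact h.le
    simpa [sX_α_self] using
      D.apply_α_mem_posCone_of_wordLength_le (D.Wg.mul_mem hw (D.sX_mem_Wg i)) h'

theorem mem_PhiPos_or_mem_PhiNeg {x : X} (hx : x ∈ D.Phi) :
    x ∈ D.PhiPos ∨ x ∈ D.PhiNeg := by
  obtain ⟨⟨u, i⟩, hu, rfl⟩ := hx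
  rcases D.apply_α_mem_posCone_or_neg_mem hu i with h | h
  · exact Or.inl ⟨⟨(u, i), hu, rfl⟩, h⟩
  · exact Or.inr ⟨D.neg_mem_Phi ⟨(u, i), hu, rfl⟩, h⟩

lemma sX_mem_PhiPos {i : I} {x : X} (hx : x ∈ D.PhiPos) (hne : x ≠ D.α i) :
    D.sX i x ∈ D.PhiPos := by
  refine (D.mem_PhiPos_or_mem_PhiNeg (D.apply_mem_Phi (D.sX_mem_Wg i) hx.1)).resolve_right ?_
  intro hneg
  have hsum : x + -D.sX i x = D.pr (D.αv i) x • D.α i := by rw [sX_apply]; abel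
  obtain ⟨c, rfl⟩ := D.exists_eq_nsmul_α_of_add_eq hx.2 hneg.2 hsum
  have hc := D.eq_one_or_eq_neg_one_of_smul_α_mem_Phi (i := i) (c := c) (by simpa using hx.1)
  have hc1 : c = 1 := by omega
  exact hne (by rw [hc1, one_smul])

lemma invSet_sX_mul_subset {y : AddAut X} (hy : y ∈ D.Wg) (i : I) :
    D.invSet (D.sX i * y) ⊆ insert (y⁻¹ (D.α i)) (D.invSet y) := by
  rintro x ⟨hx, hneg⟩
  rcases D.mem_PhiPos_or_mem_PhiNeg (D.apply_mem_Phi hy hx.1) with hpos | hyneg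
  · refine Or.inl ?_
    by_contra hne
    refine D.notMem_PhiNeg_of_mem_PhiPos (D.sX_mem_PhiPos hpos fun h => hne ?_) hneg
    rw [← h, inv_apply_apply]
  · exact Or.inr ⟨hx, hyneg⟩

lemma invSet_finite {w : AddAut X} (hw : w ∈ D.Wg) : (D.invSet w).Finite := by
  induction hw using Subgroup.closure_induction_left with
  | one =>
    refine Set.finite_empty.subset fun x hx => ?_
    exact D.notMem_PhiNeg_of_mem_PhiPos hx.1 hx.2
  | mul_left _ hs y hy ih =>
    obtain ⟨i, rfl⟩ := hs
    exact (ih.insert _).subset (D.invSet_sX_mul_subset hy i)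
  | inv_mul_cancel _ hs y hy ih =>
    obtain ⟨i, rfl⟩ := hs
    rw [sX_inv]
    exact (ih.insert _).subset (D.invSet_sX_mul_subset hy i)

end Positivity

section TitsCone

def negRoots (y : Y) : Set X := {x | x ∈ D.PhiPos ∧ D.pr y x < 0}

lemma actY_mem_Yplus {w : AddAut X} (hw : w ∈ D.Wg) {y : Y} (hy : y ∈ D.Yplus) :
    D.actY w y ∈ D.Yplus := by
  obtain ⟨⟨u, ν⟩, hu, hν, rfl⟩ := hy
  exact ⟨(w * u, ν), D.Wg.mul_mem hw hu, hν, (D.actY_mul w u ν).symm⟩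

lemma negRoots_subset_invSet {u : AddAut X} (hu : u ∈ D.Wg) {ν : Y} (hν : ν ∈ D.Ypp) :
    D.negRoots (D.actY u ν) ⊆ D.invSet u⁻¹ := by
  rintro x ⟨hx, hlt⟩
  rw [pr_actY] at hlt
  refine ⟨hx, (D.mem_PhiPos_or_mem_PhiNeg (D.apply_mem_Phi (D.Wg.inv_mem hu) hx.1)).resolve_left
    fun h => ?_⟩
  exact (D.pr_nonneg_of_mem_posCone hν h.2).not_gt hlt

lemma negRoots_actY_sX {y : Y} {i : I} (hi : D.α i ∈ D.negRoots y) :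
    D.negRoots (D.actY (D.sX i) y) = D.sX i '' (D.negRoots y \ {D.α i}) := by
  have hpr (x : X) : D.pr (D.actY (D.sX i) y) x = D.pr y (D.sX i x) := by
    rw [pr_actY, sX_inv]
  ext x
  constructor
  · rintro ⟨hx, hlt⟩
    have hne : x ≠ D.α i := by
      rintro rfl
      rw [hpr, sX_α_self, pr_neg_right] at hlt
      exact hi.2.not_gt (by omega)
    refine ⟨D.sX i x, ⟨⟨D.sX_mem_PhiPos hx hne, by rwa [← hpr]⟩, fun h => ?_⟩,
      D.sX_sX i x⟩
    rw [Set.mem_singleton_iff] at h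
    have : x = -D.α i := by rw [← D.sX_sX i x, h, sX_α_self]
    exact D.notMem_PhiNeg_of_mem_PhiPos hx (by simpa [PhiNeg, this] using D.α_mem_PhiPos i)
  · rintro ⟨x, ⟨⟨hx, hlt⟩, hne⟩, rfl⟩
    exact ⟨D.sX_mem_PhiPos hx hne, by rwa [hpr, sX_sX]⟩

lemma mem_Yplus_of_finite_negRoots {y : Y} (hy : (D.negRoots y).Finite) : y ∈ D.Yplus := by
  induction hn : (D.negRoots y).ncard generalizing y with
  | zero =>
    have hempty : D.negRoots y = ∅ := (Set.ncard_eq_zero hy).mp hn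
    refine ⟨(1, y), D.Wg.one_mem, fun i => ?_, (D.actY_one y).symm⟩
    by_contra! hi
    exact hempty.subset ⟨D.α_mem_PhiPos i, hi⟩
  | succ n ih =>
    obtain ⟨x, hx⟩ := (Set.ncard_pos hy).mp (by omega)
    have : ∃ i, D.pr y (D.α i) < 0 := by
      by_contra! hdom
      exact (D.pr_nonneg_of_mem_posCone hdom hx.1.2).not_gt hx.2
    obtain ⟨i, hi⟩ := this
    have hmem : D.α i ∈ D.negRoots y := ⟨D.α_mem_PhiPos i, hi⟩
    have hs := D.negRoots_actY_sX hmem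
    have hy' := ih (y := D.actY (D.sX i) y) (by rw [hs]; exact hy.sdiff.image _) (by
      rw [hs, Set.ncard_image_of_injective _ (D.sX i).injective,
        Set.ncard_sdiff_singleton_of_mem hmem, hn]
      rfl)
    have := D.actY_mem_Yplus (D.sX_mem_Wg i) hy'
    rwa [← actY_mul, sX_mul_self, actY_one] at this

theorem mem_Yplus_iff_finite_negRoots {y : Y} : y ∈ D.Yplus ↔ (D.negRoots y).Finite := by
  refine ⟨?_, D.mem_Yplus_of_finite_negRoots⟩
  rintro ⟨⟨u, ν⟩, hu, hν, rfl⟩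
  exact (D.invSet_finite (D.Wg.inv_mem hu)).subset (D.negRoots_subset_invSet hu hν)

/-- `0 ≤ k * n` says that `y` lies on the segment between `y + k • c` and `y - n • c`. -/
lemma negRoots_subset_union (y c : Y) {k n : ℤ} (hkn : 0 ≤ k * n) :
    D.negRoots y ⊆ D.negRoots (y + k • c) ∪ D.negRoots (y - n • c) := by
  rintro x ⟨hx, hlt⟩
  by_contra h
  have h₁ : 0 ≤ D.pr (y + k • c) x := le_of_not_gt fun h' => h (Or.inl ⟨hx, h'⟩)
  have h₂ : 0 ≤ D.pr (y - n • c) x := le_of_not_gt fun h' => h (Or.inr ⟨hx, h'⟩)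
  simp only [pr_add_left, pr_sub_left, pr_zsmul_left] at h₁ h₂
  nlinarith [mul_nonneg hkn (sq_nonneg (D.pr c x))]

lemma mem_Yplus_of_add_mem_of_sub_mem {y c : Y} {k n : ℤ} (hkn : 0 ≤ k * n)
    (h₁ : y + k • c ∈ D.Yplus) (h₂ : y - n • c ∈ D.Yplus) : y ∈ D.Yplus := by
  rw [mem_Yplus_iff_finite_negRoots] at *
  exact (h₁.union h₂).subset (D.negRoots_subset_union y c hkn)

end TitsCone

section Reflections

lemma exists_srefl_coroot_eq {b : X} (hb : b ∈ D.Phi) :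
    ∃ u ∈ D.Wg, ∃ i, b = u (D.α i) ∧ D.coroot b = D.actY u (D.αv i) ∧
      D.srefl b = u * D.sX i * u⁻¹ := by
  have h : ∃ p : AddAut X × I, p.1 ∈ D.Wg ∧ b = p.1 (D.α p.2) := hb
  exact ⟨h.choose.1, h.choose_spec.1, h.choose.2, h.choose_spec.2, by rw [coroot, dif_pos h],
    by rw [srefl, dif_pos h]⟩

lemma srefl_mem_Wg {b : X} (hb : b ∈ D.Phi) : D.srefl b ∈ D.Wg := by
  obtain ⟨u, hu, i, -, -, hs⟩ := D.exists_srefl_coroot_eq hb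
  rw [hs]
  exact D.Wg.mul_mem (D.Wg.mul_mem hu (D.sX_mem_Wg i)) (D.Wg.inv_mem hu)

lemma pr_coroot_self {b : X} (hb : b ∈ D.Phi) : D.pr (D.coroot b) b = 2 := by
  obtain ⟨u, -, i, hb, hc, -⟩ := D.exists_srefl_coroot_eq hb
  rw [hc, hb, pr_actY_apply, pr_αv_α, D.A_diag]

lemma actY_srefl {b : X} (hb : b ∈ D.Phi) (y : Y) :
    D.actY (D.srefl b) y = y - D.pr y b • D.coroot b := by
  obtain ⟨u, -, i, hb, hc, hs⟩ := D.exists_srefl_coroot_eq hb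
  rw [hs, hc, actY_mul, actY_mul, actY_sX, actY_sub, actY_zsmul, ← actY_mul, mul_inv_cancel,
    actY_one, pr_actY, inv_inv, ← hb]

end Reflections

section Affine

lemma isgn_mul_self (n : ℤ) : isgn n * n = |n| := by
  unfold isgn
  split_ifs with h
  · rw [one_mul, abs_of_nonneg h]
  · rw [abs_of_neg (not_le.mp h), neg_one_mul]

lemma affAct_inv_aroot (lam : Y) (w : AddAut X) (b : X) (n : ℤ) :
    D.affAct (D.actY w⁻¹ (-lam), w⁻¹) (aroot b n) =
      (w⁻¹ (isgn n • b), isgn n * (n - D.pr lam b)) := by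
  simp only [affAct, aroot, pr_actY_apply, pr_neg_left, pr_zsmul_right, ← isgn_mul_self]
  ring_nf

lemma snd_nonneg_of_mem_PhiAffPos {r : X × ℤ} (hr : r ∈ D.PhiAffPos) : 0 ≤ r.2 := by
  rcases hr.2 with h | h
  · exact h.le
  · exact h.1.ge

end Affine

end KM

theorem statement19_general {I X Y : Type*} [Fintype I] [AddCommGroup X] [AddCommGroup Y]
    (D : KM I X Y)
    (lam : Y) (w : AddAut X)
    (b : X) (hb : b ∈ D.PhiPos) (n : ℤ)
    (hpos : D.affAct (D.actY (w⁻¹) (-lam), w⁻¹) (KM.aroot b n) ∈ D.PhiAffPos) :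
    (D.mulA (D.saff b n) (lam, w)).1 = lam + (n - D.pr lam b) • D.coroot b ∧
    D.actY (D.srefl b) (D.mulA (D.saff b n) (lam, w)).1 = lam - n • D.coroot b ∧
    lam = (D.mulA (D.saff b n) (lam, w)).1 - (n - D.pr lam b) • D.coroot b ∧
    0 ≤ isgn n * (n - D.pr lam b) ∧
    ((D.mulA (D.saff b n) (lam, w)).1 ∈ D.Yplus → lam ∈ D.Yplus) := by
  have hμ : (D.mulA (D.saff b n) (lam, w)).1 = lam + (n - D.pr lam b) • D.coroot b := by
    change n • D.coroot b + D.actY (D.srefl b) lam = _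
    rw [D.actY_srefl hb.1]
    module
  have hsμ : D.actY (D.srefl b) (D.mulA (D.saff b n) (lam, w)).1 = lam - n • D.coroot b := by
    rw [hμ, D.actY_srefl hb.1]
    simp only [KM.pr_add_left, KM.pr_zsmul_left, D.pr_coroot_self hb.1]
    module
  have hsign : 0 ≤ isgn n * (n - D.pr lam b) := by
    simpa [KM.affAct_inv_aroot] using D.snd_nonneg_of_mem_PhiAffPos hpos
  have hkn : 0 ≤ (n - D.pr lam b) * n := by
    unfold isgn at hsign
    split_ifs at hsign <;> nlinarith
  refine ⟨hμ, hsμ, by rw [hμ]; abel, hsign, fun hμY => ?_⟩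
  have hsμY := D.actY_mem_Yplus (D.srefl_mem_Wg hb.1) hμY
  rw [hsμ] at hsμY
  rw [hμ] at hμY
  exact D.mem_Yplus_of_add_mem_of_sub_mem hkn hμY hsμY

/-- if `(π^λ w)⁻¹(β[n]) ∈ Φᵃ₊`, then writing `π^μ w' = s_{β[n]} π^λ w`,
`μ = λ + (n−⟨λ,β⟩)β^∨`, `s_β(μ) = λ − nβ^∨`, and `λ` lies on the segment `[μ, s_β(μ)]`;
in particular `μ ∈ Y⁺ → λ ∈ Y⁺`. -/
theorem statement19 {I X Y : Type*} [Fintype I] [AddCommGroup X] [AddCommGroup Y]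
    (D : KM I X Y)
    (lam : Y) (w : AddAut X) (hw : w ∈ D.Wg)
    (b : X) (hb : b ∈ D.PhiPos) (n : ℤ)
    (hpos : D.affAct (D.actY (w⁻¹) (-lam), w⁻¹) (KM.aroot b n) ∈ D.PhiAffPos) :
    (D.mulA (D.saff b n) (lam, w)).1 = lam + (n - D.pr lam b) • D.coroot b ∧
    D.actY (D.srefl b) (D.mulA (D.saff b n) (lam, w)).1 = lam - n • D.coroot b ∧
    lam = (D.mulA (D.saff b n) (lam, w)).1 - (n - D.pr lam b) • D.coroot b ∧
    0 ≤ isgn n * (n - D.pr lam b) ∧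
    ((D.mulA (D.saff b n) (lam, w)).1 ∈ D.Yplus → lam ∈ D.Yplus) :=
  statement19_general D lam w b hb n hpos
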